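/- arXiv:1405.2244 — 3 statements merged into one kernel-verified Lean document; each statement's English description precedes it below -/
import Mathlib

section
/- Let d be an admissible ultra-metric on X̄ = X ∪ X⁻¹ ∪ {e}. Then the Graev ultra-metric δ_u is a two-sided invariant ultra-metric on the free group F(X) which extends d (i.e. δ_u(a,b) = d(a,b) for all a,b ∈ X̄, and δ_u(uwv, uw'v) = δ_u(w,w') for all u,v,w,w' ∈ F(X)). -/
/-! Graev ultra-metrics on free groups (after Gao, Savchenko–Zarichnyi and
Shlossberg, "On Graev type ultra-metrics"). -/

namespace GraevStmt

variable {X : Type*}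

/-- The alphabet `X̄ = X ∪ X⁻¹ ∪ {e}`: `none` is the letter `e`,
`some (x, true)` is the letter `x` and `some (x, false)` is the letter `x⁻¹`. -/
abbrev Letter (X : Type*) := Option (X × Bool)

/-- The letter `e`. -/
def eL : Letter X := none

/-- The letter `x`, for `x ∈ X`. -/
def pos (x : X) : Letter X := some (x, true)

/-- The letter `x⁻¹`, for `x ∈ X`. -/
def neg (x : X) : Letter X := some (x, false)

/-- The formal inverse of a letter; `e⁻¹ = e` and `(x⁻¹)⁻¹ = x`. -/
def linv : Letter X → Letter X
  | none => none
  | some (x, b) => some (x, !b)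

/-- Interpretation of a letter as an element of the free group `F(X)`. -/
def toF : Letter X → FreeGroup X
  | none => 1
  | some (x, b) => FreeGroup.mk [(x, b)]

/-- The reduced word of a word `w ∈ W(X)` over the alphabet `X̄`, viewed as the
corresponding element of the free group `F(X)`. -/
def red (w : List (Letter X)) : FreeGroup X := (w.map toF).prod

/-- The canonical irreducible word over the alphabet `X̄` representing a given
element of the free group `F(X)`. -/
def wordOf [DecidableEq X] (w : FreeGroup X) : List (Letter X) :=
  w.toWord.map some

/-- `ρ_u(w, v)`: the maximum of the distances between corresponding letters of
two words of equal length. -/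
def rho (d : Letter X → Letter X → ℝ) (w v : List (Letter X)) : ℝ :=
  (List.zipWith d w v).foldr max 0

/-- The Graev ultra-metric `δ_u` on `F(X)` associated with `d`:
`δ_u(w, v) = inf {ρ_u(w*, v*) : lh(w*) = lh(v*), (w*)' = w, (v*)' = v}`. -/
noncomputable def graev (d : Letter X → Letter X → ℝ) (w v : FreeGroup X) : ℝ :=
  sInf {r : ℝ | ∃ w' v' : List (Letter X), w'.length = v'.length ∧
    red w' = w ∧ red v' = v ∧ r = rho d w' v'}

/-- `d` is an ultra-metric: symmetric, vanishing exactly on the diagonal and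
satisfying the strong triangle inequality. -/
def IsUltraMetric {A : Type*} (d : A → A → ℝ) : Prop :=
  (∀ a b, d a b = d b a) ∧ (∀ a b, d a b = 0 ↔ a = b) ∧
    ∀ a b c, d a c ≤ max (d a b) (d b c)

/-- An admissible ultra-metric on the alphabet `X̄`, i.e. an ultra-metric with
`d(x⁻¹, y⁻¹) = d(x, y)`, `d(x, e) = d(x⁻¹, e)` and `d(x⁻¹, y) = d(x, y⁻¹)`. -/
def IsAdmissible (d : Letter X → Letter X → ℝ) : Prop :=
  IsUltraMetric d ∧ (∀ x y : X, d (neg x) (neg y) = d (pos x) (pos y)) ∧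
    (∀ x : X, d (pos x) eL = d (neg x) eL) ∧
    ∀ x y : X, d (neg x) (pos y) = d (pos x) (neg y)

/-- A function `R` on `F(X) × F(X)` is (two-sided) invariant if
`R(uwv, uw'v) = R(w, w')` for all `u, v, w, w'`. -/
def IsInvariant (R : FreeGroup X → FreeGroup X → ℝ) : Prop :=
  ∀ u v w w' : FreeGroup X, R (u * w * v) (u * w' * v) = R w w'

/-- A match on `{0, …, n-1}`: an involution `θ` such that there are no
`i < j < θ(i) < θ(j)`. -/
def IsMatch {n : ℕ} (θ : Fin n → Fin n) : Prop :=
  (∀ i, θ (θ i) = i) ∧ ∀ i j : Fin n, ¬(i < j ∧ j < θ i ∧ θ i < θ j)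

/-- The word `w^θ` associated with a word `w` and a match `θ`:
its `i`-th letter is `x_i` if `θ(i) > i`, `e` if `θ(i) = i`, and
`x_{θ(i)}⁻¹` if `θ(i) < i`. -/
def matchWord (w : List (Letter X)) (θ : Fin w.length → Fin w.length) :
    List (Letter X) :=
  List.ofFn fun i => if i < θ i then w.get i
    else if θ i = i then eL else linv (w.get (θ i))

/-- `j₂(x, y) = x⁻¹y`. -/
def j2 (p : X × X) : FreeGroup X := (FreeGroup.of p.1)⁻¹ * FreeGroup.of p.2

/-- `j₂*(x, y) = xy⁻¹`. -/
def j2s (p : X × X) : FreeGroup X := FreeGroup.of p.1 * (FreeGroup.of p.2)⁻¹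

/-- `ε̃ = ⋃_{w ∈ F(X)} w (j₂(ε) ∪ j₂*(ε)) w⁻¹` for `ε ⊆ X × X`. -/
def tilde (S : Set (X × X)) : Set (FreeGroup X) :=
  ⋃ w : FreeGroup X, (fun g => w * g * w⁻¹) '' (j2 '' S ∪ j2s '' S)

/-- The extension of an ultra-metric `d` on `X` to the alphabet `X̄` determined
by a base point `x₀`: `d(x, e) = max {d(x, x₀), 1}`, `d(x⁻¹, y⁻¹) = d(x, y)`
and `d(x⁻¹, y) = d(x, y⁻¹) = max {d(x, e), d(y, e)}` for `x, y ∈ X ∪ {e}`. -/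
def ext (d : X → X → ℝ) (x₀ : X) : Letter X → Letter X → ℝ
  | none, none => 0
  | some (x, _), none => max (d x x₀) 1
  | none, some (y, _) => max (d y x₀) 1
  | some (x, true), some (y, true) => d x y
  | some (x, false), some (y, false) => d x y
  | some (x, _), some (y, _) => max (max (d x x₀) 1) (max (d y x₀) 1)

/-- The extension of an ultra-metric `d` of diameter at most `1` on `X` to the
alphabet `X̄`, with `d(x⁻¹, y⁻¹) = d(x, y)` and
`d(x⁻¹, y) = d(x, y⁻¹) = d(x, e) = d(x⁻¹, e) = 1`. -/
def extOne (d : X → X → ℝ) : Letter X → Letter X → ℝ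
  | none, none => 0
  | some (x, true), some (y, true) => d x y
  | some (x, false), some (y, false) => d x y
  | _, _ => 1

/-- The homomorphism `α : F(X) → ℤ` extending the constant map `X → {1} ⊆ ℤ`. -/
def alpha (w : FreeGroup X) : ℤ :=
  Multiplicative.toAdd ((FreeGroup.lift fun _ : X => Multiplicative.ofAdd (1 : ℤ)) w)

/-- `F(q_r) : F(X) → F(X/F_r)`, where `X/F_r` is the quotient of `X` by the
partition into open balls of radius `r` (for an ultra-metric the relation
`d x y < r` is an equivalence relation, so `Quot` of this relation is exactly
this quotient) and `q_r` is the quotient map. -/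
def Fq (d : X → X → ℝ) (r : ℝ) :
    FreeGroup X →* FreeGroup (Quot fun x y : X => d x y < r) :=
  FreeGroup.map (Quot.mk _)

/-- The Savchenko–Zarichnyi function `d̂` on `F(X) × F(X)`:
`d̂(v, w) = 1` if `α(v) ≠ α(w)`, and
`d̂(v, w) = inf {r > 0 : F(q_r)(v) = F(q_r)(w)}` if `α(v) = α(w)`. -/
noncomputable def dHat (d : X → X → ℝ) (v w : FreeGroup X) : ℝ :=
  if alpha v = alpha w then sInf {r : ℝ | 0 < r ∧ Fq d r v = Fq d r w} else 1

/-! ### Auxiliary development for the proof -/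

section Aux

variable {X : Type*} {d : Letter X → Letter X → ℝ} {r : ℝ}

lemma linv_linv (c : Letter X) : linv (linv c) = c := by
  rcases c with _ | ⟨x, b⟩ <;> simp [linv]

lemma toF_linv (c : Letter X) : toF (linv c) = (toF c)⁻¹ := by
  rcases c with _ | ⟨x, b⟩
  · simp [linv, toF]
  · cases b <;> simp [linv, toF, FreeGroup.inv_mk, FreeGroup.invRev]

lemma toF_some (p : X × Bool) : toF (some p) = FreeGroup.mk [p] := by
  obtain ⟨x, b⟩ := p; rfl

/-! d-facts -/

lemma d_symm (hd : IsAdmissible d) (a b : Letter X) : d a b = d b a := hd.1.1 a b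

lemma d_self (hd : IsAdmissible d) (a : Letter X) : d a a = 0 := (hd.1.2.1 a a).2 rfl

lemma d_ultra (hd : IsAdmissible d) (a b c : Letter X) : d a c ≤ max (d a b) (d b c) :=
  hd.1.2.2 a b c

lemma d_nonneg (hd : IsAdmissible d) (a b : Letter X) : 0 ≤ d a b := by
  have h := hd.1.2.2 a b a
  rw [d_self hd, d_symm hd b a, max_self] at h
  exact h

lemma d_linv (hd : IsAdmissible d) (a b : Letter X) : d (linv a) (linv b) = d a b := by
  obtain ⟨⟨hs, h0, ht⟩, h1, h2, h3⟩ := hd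
  rcases a with _ | ⟨x, bx⟩ <;> rcases b with _ | ⟨y, by'⟩
  · rfl
  · cases by'
    · calc d eL (pos y) = d (pos y) eL := hs _ _
        _ = d (neg y) eL := h2 y
        _ = d eL (neg y) := hs _ _
    · calc d eL (neg y) = d (neg y) eL := hs _ _
        _ = d (pos y) eL := (h2 y).symm
        _ = d eL (pos y) := hs _ _
  · cases bx
    · exact h2 x
    · exact (h2 x).symm
  · cases bx <;> cases by'
    · exact (h1 x y).symm
    · exact (h3 x y).symm
    · exact h3 x y
    · exact h1 x y

lemma d_linv_left (hd : IsAdmissible d) (a b : Letter X) : d (linv a) b = d a (linv b) := by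
  conv_lhs => rw [← linv_linv b]
  exact d_linv hd a (linv b)

lemma d_linv_e (hd : IsAdmissible d) (a : Letter X) : d (linv a) eL = d a eL := by
  have h := d_linv hd a eL
  rwa [show linv (eL : Letter X) = eL from rfl] at h

lemma d_eL_linv (hd : IsAdmissible d) (b : Letter X) : d eL (linv b) = d eL b := by
  rw [d_symm hd eL (linv b), d_linv_e hd, d_symm hd b eL]

lemma d_lt_symm (hd : IsAdmissible d) {c c' : Letter X} (h : d c c' < r) : d c' c < r := by
  rwa [d_symm hd c' c]

lemma d_lt_trans (hd : IsAdmissible d) {c₁ c₂ c₃ : Letter X} (h1 : d c₁ c₂ < r)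
    (h2 : d c₂ c₃ < r) : d c₁ c₃ < r :=
  lt_of_le_of_lt (d_ultra hd c₁ c₂ c₃) (max_lt h1 h2)

lemma d_lt_refl (hd : IsAdmissible d) (hr : 0 < r) (c : Letter X) : d c c < r := by
  rw [d_self hd]; exact hr

/-! rho facts -/

lemma foldr_max_nonneg (l : List ℝ) : 0 ≤ l.foldr max 0 := by
  induction l with
  | nil => exact le_refl 0
  | cons a l ih => exact le_trans ih (le_max_right a _)

lemma rho_nonneg (d : Letter X → Letter X → ℝ) (w v : List (Letter X)) : 0 ≤ rho d w v :=
  foldr_max_nonneg _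

lemma rho_cons (d : Letter X → Letter X → ℝ) (a b : Letter X) (w v : List (Letter X)) :
    rho d (a :: w) (b :: v) = max (d a b) (rho d w v) := by
  simp [rho]

lemma foldr_max_append (l₁ l₂ : List ℝ) :
    (l₁ ++ l₂).foldr max 0 = max (l₁.foldr max 0) (l₂.foldr max 0) := by
  induction l₁ with
  | nil => rw [List.nil_append]; exact (max_eq_right (foldr_max_nonneg l₂)).symm
  | cons a l ih => simp only [List.cons_append, List.foldr_cons, ih, max_assoc]

lemma rho_append (d : Letter X → Letter X → ℝ) {w₁ v₁ : List (Letter X)}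
    (w₂ v₂ : List (Letter X)) (h : w₁.length = v₁.length) :
    rho d (w₁ ++ w₂) (v₁ ++ v₂) = max (rho d w₁ v₁) (rho d w₂ v₂) := by
  unfold rho
  rw [List.zipWith_append h, foldr_max_append]

lemma rho_self (hd : IsAdmissible d) (w : List (Letter X)) : rho d w w = 0 := by
  induction w with
  | nil => rfl
  | cons c w ih => rw [rho_cons, ih, d_self hd, max_self]

lemma rho_symm (hd : IsAdmissible d) : ∀ w v : List (Letter X), rho d w v = rho d v w := by
  intro w
  induction w with
  | nil => intro v; simp [rho]
  | cons c w ih =>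
    intro v
    cases v with
    | nil => simp [rho]
    | cons c' v => rw [rho_cons, rho_cons, d_symm hd, ih]

lemma rho_singleton (hd : IsAdmissible d) (a b : Letter X) : rho d [a] [b] = d a b := by
  rw [show rho d [a] [b] = max (d a b) 0 from rfl]
  exact max_eq_left (d_nonneg hd a b)

/-! red facts -/

lemma red_nil : red ([] : List (Letter X)) = 1 := rfl

lemma red_cons (c : Letter X) (w : List (Letter X)) : red (c :: w) = toF c * red w := by
  simp [red]

lemma red_append (w v : List (Letter X)) : red (w ++ v) = red w * red v := by
  simp [red]

lemma red_singleton (c : Letter X) : red [c] = toF c := by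
  simp [red]

lemma red_replicate (n : ℕ) : red (List.replicate n (eL : Letter X)) = 1 := by
  induction n with
  | zero => rfl
  | succ n ih => rw [List.replicate_succ, red_cons, ih, mul_one]; rfl

/-- formal inverse of a word -/
def invRevL (w : List (Letter X)) : List (Letter X) := (w.map linv).reverse

lemma invRevL_length (w : List (Letter X)) : (invRevL w).length = w.length := by
  simp [invRevL]

lemma red_invRevL (w : List (Letter X)) : red (invRevL w) = (red w)⁻¹ := by
  induction w with
  | nil => simp [invRevL, red]
  | cons c w ih =>
    have h : invRevL (c :: w) = invRevL w ++ [linv c] := by simp [invRevL]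
    rw [h, red_append, ih, red_singleton, toF_linv, red_cons, mul_inv_rev]

lemma prod_mk (L : List (X × Bool)) :
    (L.map fun p => FreeGroup.mk [p]).prod = FreeGroup.mk L := by
  induction L with
  | nil => rw [List.map_nil, List.prod_nil]; exact FreeGroup.one_eq_mk
  | cons p L ih => rw [List.map_cons, List.prod_cons, ih, FreeGroup.mul_mk]; rfl

lemma red_wordOf [DecidableEq X] (u : FreeGroup X) : red (wordOf u) = u := by
  unfold red wordOf
  rw [List.map_map]
  rw [show toF ∘ (some : X × Bool → Letter X) = fun p : X × Bool => FreeGroup.mk [p]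
    from funext toF_some]
  rw [prod_mk, FreeGroup.mk_toWord]

/-! the set of representations -/

def Srep (d : Letter X → Letter X → ℝ) (w v : FreeGroup X) : Set ℝ :=
  {r : ℝ | ∃ w' v' : List (Letter X), w'.length = v'.length ∧
    red w' = w ∧ red v' = v ∧ r = rho d w' v'}

lemma graev_def (d : Letter X → Letter X → ℝ) (w v : FreeGroup X) :
    graev d w v = sInf (Srep d w v) := rfl

lemma Srep_nonempty [DecidableEq X] (d : Letter X → Letter X → ℝ) (u v : FreeGroup X) :
    (Srep d u v).Nonempty := by
  refine ⟨_, wordOf u ++ List.replicate (wordOf v).length eL,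
    List.replicate (wordOf u).length eL ++ wordOf v, ?_, ?_, ?_, rfl⟩
  · simp [Nat.add_comm]
  · rw [red_append, red_replicate, red_wordOf, mul_one]
  · rw [red_append, red_replicate, red_wordOf, one_mul]

lemma Srep_bddBelow (d : Letter X → Letter X → ℝ) (u v : FreeGroup X) :
    BddBelow (Srep d u v) := by
  refine ⟨0, ?_⟩
  rintro s ⟨w1, v1, -, -, -, rfl⟩
  exact rho_nonneg d w1 v1

lemma graev_le_rho {u v : FreeGroup X} {w' v' : List (Letter X)}
    (hl : w'.length = v'.length) (hw : red w' = u) (hv : red v' = v) :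
    graev d u v ≤ rho d w' v' := by
  rw [graev_def]
  exact csInf_le (Srep_bddBelow d u v) ⟨w', v', hl, hw, hv, rfl⟩

lemma graev_nonneg (d : Letter X → Letter X → ℝ) (u v : FreeGroup X) :
    0 ≤ graev d u v := by
  rw [graev_def]
  refine Real.sInf_nonneg ?_
  rintro s ⟨w1, v1, -, -, -, rfl⟩
  exact rho_nonneg d w1 v1

/-! transfer along group homomorphisms -/

lemma lift_toF {G : Type*} [Group G] (π : Letter X → G) (he : π eL = 1)
    (hi : ∀ c, π (linv c) = (π c)⁻¹) (c : Letter X) :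
    FreeGroup.lift (fun x => π (pos x)) (toF c) = π c := by
  rcases c with _ | ⟨x, b⟩
  · rw [show toF (none : Letter X) = 1 from rfl, map_one]; exact he.symm
  · cases b
    · rw [show toF (some (x, false) : Letter X) = (FreeGroup.of x)⁻¹ from rfl, map_inv,
        FreeGroup.lift_apply_of]
      exact (hi (pos x)).symm
    · rw [show toF (some (x, true) : Letter X) = FreeGroup.of x from rfl, FreeGroup.lift_apply_of]
      rfl

lemma lift_red {G : Type*} [Group G] (π : Letter X → G) (he : π eL = 1)
    (hi : ∀ c, π (linv c) = (π c)⁻¹) (w : List (Letter X)) :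
    FreeGroup.lift (fun x => π (pos x)) (red w) = (w.map π).prod := by
  induction w with
  | nil => simp [red]
  | cons c w ih =>
    rw [red_cons, map_mul, ih, lift_toF π he hi, List.map_cons, List.prod_cons]

lemma map_eq_of_rho_lt {G : Type*} (π : Letter X → G)
    (hconst : ∀ c c', d c c' < r → π c = π c') :
    ∀ {w v : List (Letter X)}, w.length = v.length → rho d w v < r →
      w.map π = v.map π := by
  intro w
  induction w with
  | nil =>
    intro v hl _
    cases v with
    | nil => rfl
    | cons c' v => simp at hl
  | cons c w ih =>
    intro v hl hρ
    cases v with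
    | nil => simp at hl
    | cons c' v =>
      rw [rho_cons] at hρ
      obtain ⟨h1, h2⟩ := max_lt_iff.mp hρ
      simp only [List.map_cons]
      rw [hconst c c' h1, ih (by simpa using hl) h2]

lemma graev_ge_of_sep {G : Type*} [Group G]
    (π : Letter X → G) (he : π eL = 1) (hi : ∀ c, π (linv c) = (π c)⁻¹)
    (hconst : ∀ c c', d c c' < r → π c = π c') {u v : FreeGroup X}
    (hne : FreeGroup.lift (fun x => π (pos x)) u ≠ FreeGroup.lift (fun x => π (pos x)) v) :
    r ≤ graev d u v := by
  classical
  rw [graev_def]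
  refine le_csInf (Srep_nonempty d u v) ?_
  rintro s ⟨w1, v1, hl, hw, hv, rfl⟩
  by_contra hlt
  push_neg at hlt
  exact hne (by rw [← hw, ← hv, lift_red π he hi, lift_red π he hi,
    map_eq_of_rho_lt π hconst hl hlt])

/-! the separating functions for the extension property -/

open Classical in
/-- First component of the separating function. -/
noncomputable def gOne (d : Letter X → Letter X → ℝ) (r : ℝ) (b c : Letter X) : ℤ :=
  if d b (linv b) < r then 0 else if d c b < r then 1 else if d c (linv b) < r then -1 else 0

open Classical in
/-- Second/third component of the separating function. -/
noncomputable def gT (d : Letter X → Letter X → ℝ) (r : ℝ) (t c : Letter X) : ZMod 2 :=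
  if d t eL < r then 0 else if d c t < r ∨ d c (linv t) < r then 1 else 0

lemma zmod2_neg : ∀ x : ZMod 2, -x = x := by decide

lemma gOne_eL (hd : IsAdmissible d) (b : Letter X) : gOne d r b eL = 0 := by
  unfold gOne
  split_ifs with h1 h2 h3
  · rfl
  · exact absurd (d_lt_trans hd (d_lt_symm hd h2)
      (by rw [d_eL_linv hd]; exact h2)) h1
  · rw [d_eL_linv hd] at h3; exact absurd h3 h2
  · rfl

lemma gOne_linv (hd : IsAdmissible d) (b c : Letter X) :
    gOne d r b (linv c) = - gOne d r b c := by
  unfold gOne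
  rw [d_linv_left hd, d_linv hd]
  by_cases hbb : d b (linv b) < r
  · rw [if_pos hbb, if_pos hbb, neg_zero]
  · rw [if_neg hbb, if_neg hbb]
    by_cases h1 : d c b < r <;> by_cases h2 : d c (linv b) < r
    · exact absurd (d_lt_trans hd (d_lt_symm hd h1) h2) hbb
    · rw [if_neg h2, if_pos h1, if_pos h1]
    · rw [if_pos h2, if_neg h1, if_pos h2]; norm_num
    · rw [if_neg h2, if_neg h1, if_neg h1, if_neg h2, neg_zero]

lemma gOne_congr (hd : IsAdmissible d) {c c' : Letter X} (h : d c c' < r) (b : Letter X) :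
    gOne d r b c = gOne d r b c' := by
  unfold gOne
  by_cases hbb : d b (linv b) < r
  · rw [if_pos hbb, if_pos hbb]
  · rw [if_neg hbb, if_neg hbb]
    have e1 : d c b < r ↔ d c' b < r :=
      ⟨fun hh => d_lt_trans hd (d_lt_symm hd h) hh, fun hh => d_lt_trans hd h hh⟩
    have e2 : d c (linv b) < r ↔ d c' (linv b) < r :=
      ⟨fun hh => d_lt_trans hd (d_lt_symm hd h) hh, fun hh => d_lt_trans hd h hh⟩
    by_cases h1 : d c b < r
    · rw [if_pos h1, if_pos (e1.mp h1)]
    · rw [if_neg h1, if_neg (fun hh => h1 (e1.mpr hh))]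
      by_cases h2 : d c (linv b) < r
      · rw [if_pos h2, if_pos (e2.mp h2)]
      · rw [if_neg h2, if_neg (fun hh => h2 (e2.mpr hh))]

lemma gT_eL (hd : IsAdmissible d) (t : Letter X) : gT d r t eL = 0 := by
  unfold gT
  split_ifs with h1 h2
  · rfl
  · exfalso
    rcases h2 with h | h
    · exact h1 (d_lt_symm hd h)
    · rw [d_eL_linv hd] at h; exact h1 (d_lt_symm hd h)
  · rfl

lemma gT_linv (hd : IsAdmissible d) (t c : Letter X) : gT d r t (linv c) = gT d r t c := by
  unfold gT
  rw [d_linv_left hd, d_linv hd]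
  by_cases ht : d t eL < r
  · rw [if_pos ht, if_pos ht]
  · rw [if_neg ht, if_neg ht]
    by_cases h : d c t < r ∨ d c (linv t) < r
    · rw [if_pos h.symm, if_pos h]
    · rw [if_neg (fun hh => h hh.symm), if_neg h]

lemma gT_congr (hd : IsAdmissible d) {c c' : Letter X} (h : d c c' < r) (t : Letter X) :
    gT d r t c = gT d r t c' := by
  unfold gT
  by_cases ht : d t eL < r
  · rw [if_pos ht, if_pos ht]
  · rw [if_neg ht, if_neg ht]
    have e : (d c t < r ∨ d c (linv t) < r) ↔ (d c' t < r ∨ d c' (linv t) < r) := by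
      constructor
      · rintro (hh | hh)
        · exact Or.inl (d_lt_trans hd (d_lt_symm hd h) hh)
        · exact Or.inr (d_lt_trans hd (d_lt_symm hd h) hh)
      · rintro (hh | hh)
        · exact Or.inl (d_lt_trans hd h hh)
        · exact Or.inr (d_lt_trans hd h hh)
    by_cases h1 : d c t < r ∨ d c (linv t) < r
    · rw [if_pos h1, if_pos (e.mp h1)]
    · rw [if_neg h1, if_neg (fun hh => h1 (e.mpr hh))]

lemma d_le_graev (hd : IsAdmissible d) {a b : Letter X} (hab : a ≠ b) :
    d a b ≤ graev d (toF a) (toF b) := by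
  classical
  set r := d a b with hrdef
  have hr : 0 < r := by
    rcases lt_or_eq_of_le (d_nonneg hd a b) with h | h
    · exact h
    · exact absurd ((hd.1.2.1 a b).1 h.symm) hab
  have hab' : ¬ d a b < r := by rw [← hrdef]; exact lt_irrefl r
  set g : Letter X → ℤ × ZMod 2 × ZMod 2 := fun c => (gOne d r b c, gT d r a c, gT d r b c)
    with hg
  set π : Letter X → Multiplicative (ℤ × ZMod 2 × ZMod 2) :=
    fun c => Multiplicative.ofAdd (g c) with hπ
  have he : π eL = 1 := by
    rw [hπ]; simp only
    rw [hg]; simp only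
    rw [gOne_eL hd, gT_eL hd, gT_eL hd]
    exact ofAdd_zero
  have hi : ∀ c, π (linv c) = (π c)⁻¹ := by
    intro c
    rw [hπ]; simp only
    rw [← ofAdd_neg]
    congr 1
    rw [hg]; simp only
    rw [Prod.neg_mk, Prod.neg_mk, gOne_linv hd, gT_linv hd, gT_linv hd,
      zmod2_neg, zmod2_neg]
  have hconst : ∀ c c', d c c' < r → π c = π c' := by
    intro c c' h
    rw [hπ]; simp only
    congr 1
    rw [hg]; simp only
    rw [gOne_congr hd h, gT_congr hd h, gT_congr hd h]
  have hgne : g a ≠ g b := by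
    intro h
    rw [hg] at h; simp only at h
    have h1 : gOne d r b a = gOne d r b b := congrArg Prod.fst h
    have h2 : gT d r a a = gT d r a b := congrArg (fun p => p.2.1) h
    have h3 : gT d r b a = gT d r b b := congrArg (fun p => p.2.2) h
    by_cases hbb : d b (linv b) < r
    · have e1 : ∀ hbe : ¬ d b eL < r, gT d r b b = 1 := fun hbe => by
        unfold gT; rw [if_neg hbe, if_pos (Or.inl (d_lt_refl hd hr b))]
      have e2 : ∀ hbe : ¬ d b eL < r, gT d r b a = 0 := fun hbe => by
        unfold gT; rw [if_neg hbe, if_neg ?_]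
        rintro (h' | h')
        · exact hab' h'
        · exact hab' (d_lt_trans hd h' (d_lt_symm hd hbb))
      by_cases hae : d a eL < r
      · have hbe : ¬ d b eL < r := fun hbe =>
          hab' (d_lt_trans hd hae (d_lt_symm hd hbe))
        rw [e2 hbe, e1 hbe] at h3
        exact (by decide : (0 : ZMod 2) ≠ 1) h3
      · by_cases hbla : d b (linv a) < r
        · have hbe : ¬ d b eL < r := by
            intro hbe
            apply hae
            have h' : d (linv a) eL < r := d_lt_trans hd (d_lt_symm hd hbla) hbe
            rwa [d_linv_e hd] at h'
          rw [e2 hbe, e1 hbe] at h3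
          exact (by decide : (0 : ZMod 2) ≠ 1) h3
        · have f1 : gT d r a a = 1 := by
            unfold gT; rw [if_neg hae, if_pos (Or.inl (d_lt_refl hd hr a))]
          have f2 : gT d r a b = 0 := by
            unfold gT; rw [if_neg hae, if_neg ?_]
            rintro (h' | h')
            · exact hab' (d_lt_symm hd h')
            · exact hbla h'
          rw [f1, f2] at h2
          exact (by decide : (1 : ZMod 2) ≠ 0) h2
    · have e1 : gOne d r b b = 1 := by
        unfold gOne; rw [if_neg hbb, if_pos (d_lt_refl hd hr b)]
      have e2 : gOne d r b a ≠ 1 := by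
        unfold gOne; rw [if_neg hbb, if_neg hab']
        split_ifs <;> decide
      exact e2 (by rw [h1, e1])
  have key := graev_ge_of_sep (d := d) π he hi hconst
    (u := toF a) (v := toF b) ?_
  · exact key
  · rw [lift_toF π he hi, lift_toF π he hi]
    intro h
    exact hgne (Multiplicative.ofAdd.injective h)

/-! minimum positive distance over a finite list of letters -/

lemma exists_min_single (hd : IsAdmissible d) (a : Letter X) (T : List (Letter X)) :
    ∃ r : ℝ, 0 < r ∧ ∀ c ∈ T, c ≠ a → r ≤ d a c := by
  induction T with
  | nil => exact ⟨1, one_pos, by simp⟩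
  | cons bb T ih =>
    obtain ⟨r, hr, hmin⟩ := ih
    by_cases hb : bb = a
    · refine ⟨r, hr, ?_⟩
      intro c hc hca
      rcases List.mem_cons.mp hc with rfl | hc
      · exact absurd hb hca
      · exact hmin c hc hca
    · refine ⟨min r (d a bb), lt_min hr ?_, ?_⟩
      · rcases lt_or_eq_of_le (d_nonneg hd a bb) with h | h
        · exact h
        · exact absurd ((hd.1.2.1 a bb).1 h.symm).symm hb
      · intro c hc hca
        rcases List.mem_cons.mp hc with rfl | hc
        · exact min_le_right _ _
        · exact (min_le_left _ _).trans (hmin c hc hca)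

lemma exists_min (hd : IsAdmissible d) (T : List (Letter X)) :
    ∃ r : ℝ, 0 < r ∧ ∀ c ∈ T, ∀ c' ∈ T, c ≠ c' → r ≤ d c c' := by
  induction T with
  | nil => exact ⟨1, one_pos, by simp⟩
  | cons a T ih =>
    obtain ⟨r1, hr1, h1⟩ := ih
    obtain ⟨r2, hr2, h2⟩ := exists_min_single hd a T
    refine ⟨min r1 r2, lt_min hr1 hr2, ?_⟩
    intro c hc c' hc' hne
    rcases List.mem_cons.mp hc with rfl | hc
    · rcases List.mem_cons.mp hc' with h' | hc'
      · exact absurd h'.symm hne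
      · exact (min_le_right _ _).trans (h2 c' hc' (Ne.symm hne))
    · rcases List.mem_cons.mp hc' with h' | hc'
      · rw [h', d_symm hd]
        exact (min_le_right _ _).trans (h2 c hc fun hh => hne (hh.trans h'.symm))
      · exact (min_le_left _ _).trans (h1 c hc c' hc' hne)

/-! separation for a nontrivial element of the free group -/

lemma le_graev_one (hd : IsAdmissible d) {z : FreeGroup X} (hz : z ≠ 1) :
    ∃ r : ℝ, 0 < r ∧ r ≤ graev d 1 z := by
  classical
  set L : List (X × Bool) := z.toWord with hL
  set S : List (Letter X) := L.map some ++ L.map (fun p => some (p.1, !p.2)) with hS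
  obtain ⟨r, hr, hmin⟩ := exists_min hd (eL :: S)
  have hSe : ∀ s ∈ S, s ≠ eL := by
    intro s hs
    rcases List.mem_append.mp hs with h | h <;>
      obtain ⟨p, -, rfl⟩ := List.mem_map.mp h <;> simp [eL]
  have hScl : ∀ s ∈ S, linv s ∈ S := by
    intro s hs
    rcases List.mem_append.mp hs with h | h
    · obtain ⟨p, hp, rfl⟩ := List.mem_map.mp h
      refine List.mem_append.mpr (Or.inr (List.mem_map.mpr ⟨p, hp, ?_⟩))
      obtain ⟨x, bb⟩ := p; rfl
    · obtain ⟨p, hp, rfl⟩ := List.mem_map.mp h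
      refine List.mem_append.mpr (Or.inl (List.mem_map.mpr ⟨p, hp, ?_⟩))
      obtain ⟨x, bb⟩ := p
      simp [linv]
  have huniq : ∀ c s s', s ∈ S → s' ∈ S → d c s < r → d c s' < r → s = s' := by
    intro c s s' hs hs' hc1 hc2
    by_contra hne
    have hge := hmin s (List.mem_cons_of_mem _ hs) s' (List.mem_cons_of_mem _ hs') hne
    exact absurd (d_lt_trans hd (d_lt_symm hd hc1) hc2) (not_lt.mpr hge)
  set π : Letter X → FreeGroup X :=
    fun c => if h : ∃ s, s ∈ S ∧ d c s < r then toF h.choose else 1 with hπ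
  have pi_eq : ∀ {c s : Letter X}, s ∈ S → d c s < r → π c = toF s := by
    intro c s hs hcs
    have hex : ∃ s, s ∈ S ∧ d c s < r := ⟨s, hs, hcs⟩
    rw [hπ]; simp only
    rw [dif_pos hex]
    exact congrArg toF (huniq c _ s hex.choose_spec.1 hs hex.choose_spec.2 hcs)
  have pi_one : ∀ {c : Letter X}, (¬ ∃ s, s ∈ S ∧ d c s < r) → π c = 1 := by
    intro c h
    rw [hπ]; simp only
    rw [dif_neg h]
  have he : π eL = 1 := by
    apply pi_one
    rintro ⟨s, hs, hlt⟩
    have hge := hmin eL List.mem_cons_self s (List.mem_cons_of_mem _ hs)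
      (Ne.symm (hSe s hs))
    exact absurd hlt (not_lt.mpr hge)
  have hi : ∀ c, π (linv c) = (π c)⁻¹ := by
    intro c
    by_cases h : ∃ s, s ∈ S ∧ d c s < r
    · obtain ⟨s, hs, hcs⟩ := h
      rw [pi_eq hs hcs, pi_eq (hScl s hs) (by rw [d_linv hd]; exact hcs), toF_linv]
    · rw [pi_one h, pi_one ?_, inv_one]
      rintro ⟨s, hs, hlt⟩
      refine h ⟨linv s, hScl s hs, ?_⟩
      rw [← d_linv_left hd]
      exact hlt
  have hconst : ∀ c c', d c c' < r → π c = π c' := by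
    intro c c' hcc
    by_cases h : ∃ s, s ∈ S ∧ d c s < r
    · obtain ⟨s, hs, hcs⟩ := h
      rw [pi_eq hs hcs, pi_eq hs (d_lt_trans hd (d_lt_symm hd hcc) hcs)]
    · rw [pi_one h, pi_one ?_]
      rintro ⟨s, hs, hlt⟩
      exact h ⟨s, hs, d_lt_trans hd hcc hlt⟩
  have hz' : FreeGroup.lift (fun x => π (pos x)) z = z := by
    conv_lhs => rw [← red_wordOf z]
    rw [lift_red π he hi]
    have hmapeq : (wordOf z).map π = (wordOf z).map toF := by
      apply List.map_congr_left
      intro c hc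
      have hcS : c ∈ S := by
        refine List.mem_append.mpr (Or.inl ?_)
        unfold wordOf at hc
        rw [← hL] at hc
        exact hc
      exact pi_eq hcS (d_lt_refl hd hr c)
    rw [hmapeq]
    exact red_wordOf z
  refine ⟨r, hr, graev_ge_of_sep (d := d) π he hi hconst ?_⟩
  rw [map_one, hz']
  exact fun h => hz h.symm

/-! symmetry, triangle inequality and invariance -/

lemma graev_symm (hd : IsAdmissible d) (u v : FreeGroup X) : graev d u v = graev d v u := by
  rw [graev_def, graev_def]
  congr 1
  ext s
  constructor <;> rintro ⟨w1, v1, hl, h1, h2, rfl⟩ <;>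
    exact ⟨v1, w1, hl.symm, h2, h1, rho_symm hd w1 v1⟩

lemma graev_triangle (hd : IsAdmissible d) (u v w : FreeGroup X) :
    graev d u w ≤ max (graev d u v) (graev d v w) := by
  classical
  have hne1 := Srep_nonempty d u v
  have hne2 := Srep_nonempty d v w
  refine le_of_forall_pos_le_add ?_
  intro ε hε
  obtain ⟨s, hs, hslt⟩ := Real.lt_sInf_add_pos hne1 hε
  obtain ⟨t, ht, htlt⟩ := Real.lt_sInf_add_pos hne2 hε
  obtain ⟨w1, v1, hl1, hw1, hv1, rfl⟩ := hs
  obtain ⟨v2, w2, hl2, hv2, hw2, rfl⟩ := ht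
  have key : graev d u w ≤ max (rho d w1 v1) (rho d v2 w2) := by
    have hred1 : red (w1 ++ (invRevL v1 ++ v2)) = u := by
      rw [red_append, red_append, red_invRevL, hw1, hv1, hv2]
      simp
    have hred2 : red (v1 ++ (invRevL v1 ++ w2)) = w := by
      rw [red_append, red_append, red_invRevL, hv1, hw2]
      simp
    have hρ : rho d (w1 ++ (invRevL v1 ++ v2)) (v1 ++ (invRevL v1 ++ w2)) =
        max (rho d w1 v1) (rho d v2 w2) := by
      rw [rho_append d _ _ hl1, rho_append d _ _ rfl, rho_self hd,
        max_eq_right (rho_nonneg d v2 w2)]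
    have hlen : (w1 ++ (invRevL v1 ++ v2)).length = (v1 ++ (invRevL v1 ++ w2)).length := by
      simp [invRevL, hl1, hl2]
    calc graev d u w ≤ rho d (w1 ++ (invRevL v1 ++ v2)) (v1 ++ (invRevL v1 ++ w2)) :=
          graev_le_rho hlen hred1 hred2
      _ = max (rho d w1 v1) (rho d v2 w2) := hρ
  refine key.trans ?_
  have h1 : rho d w1 v1 ≤ max (graev d u v) (graev d v w) + ε :=
    le_trans hslt.le (by rw [← graev_def]; exact add_le_add_left (le_max_left _ _) ε)
  have h2 : rho d v2 w2 ≤ max (graev d u v) (graev d v w) + ε :=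
    le_trans htlt.le (by rw [← graev_def]; exact add_le_add_left (le_max_right _ _) ε)
  exact max_le h1 h2

lemma graev_mul_le (hd : IsAdmissible d) (u v w w' : FreeGroup X) :
    graev d (u * w * v) (u * w' * v) ≤ graev d w w' := by
  classical
  rw [graev_def, graev_def]
  refine csInf_le_csInf (Srep_bddBelow d _ _) (Srep_nonempty d w w') ?_
  rintro s ⟨w1, w2, hl, h1, h2, rfl⟩
  refine ⟨wordOf u ++ w1 ++ wordOf v, wordOf u ++ w2 ++ wordOf v, by simp [hl], ?_, ?_, ?_⟩
  · rw [red_append, red_append, red_wordOf, red_wordOf, h1]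
  · rw [red_append, red_append, red_wordOf, red_wordOf, h2]
  · rw [rho_append d _ _ (by simp [hl]), rho_append d _ _ rfl, rho_self hd, rho_self hd,
      max_eq_right (rho_nonneg d w1 w2), max_eq_left (rho_nonneg d w1 w2)]

end Aux

/-- Gao's Theorem 2.4: for an admissible ultra-metric `d` on `X̄`, the Graev
ultra-metric `δ_u` is a two-sided invariant ultra-metric on `F(X)`
extending `d`. -/
theorem graev_isUltraMetric_isInvariant_extends {X : Type*} [Nonempty X]
    (d : Letter X → Letter X → ℝ) (hd : IsAdmissible d) :
    IsUltraMetric (graev d) ∧ IsInvariant (graev d) ∧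
      ∀ a b : Letter X, graev d (toF a) (toF b) = d a b := by
  classical
  have hdiag : ∀ u : FreeGroup X, graev d u u = 0 := by
    intro u
    refine le_antisymm ?_ (graev_nonneg d u u)
    have h := graev_le_rho (d := d) (u := u) (v := u) rfl (red_wordOf u) (red_wordOf u)
    rwa [rho_self hd] at h
  have hinv : IsInvariant (graev d) := by
    intro u v w w'
    refine le_antisymm (graev_mul_le hd u v w w') ?_
    have h2 := graev_mul_le hd u⁻¹ v⁻¹ (u * w * v) (u * w' * v)
    have e1 : u⁻¹ * (u * w * v) * v⁻¹ = w := by group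
    have e2 : u⁻¹ * (u * w' * v) * v⁻¹ = w' := by group
    rwa [e1, e2] at h2
  refine ⟨⟨fun u v => graev_symm hd u v, ?_, fun u v w => graev_triangle hd u v w⟩,
    hinv, ?_⟩
  · intro u v
    constructor
    · intro h0
      by_contra hne
      have hz : u⁻¹ * v ≠ 1 := fun h => hne (by rw [← inv_mul_eq_one]; exact h)
      obtain ⟨r, hr, hle⟩ := le_graev_one hd hz
      have heq : graev d u v = graev d 1 (u⁻¹ * v) := by
        have h := hinv u 1 1 (u⁻¹ * v)
        rw [mul_one, mul_one, mul_one, mul_inv_cancel_left] at h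
        exact h
      rw [← heq, h0] at hle
      exact absurd hle (not_le.mpr hr)
    · rintro rfl
      exact hdiag u
  · intro a b
    by_cases hab : a = b
    · subst hab
      rw [hdiag, d_self hd]
    · refine le_antisymm ?_ (d_le_graev hd hab)
      have h := graev_le_rho (d := d) (w' := [a]) (v' := [b]) rfl
        (red_singleton a) (red_singleton b)
      rwa [rho_singleton hd] at h

end GraevStmt
end

section
/- Let X be a nonempty set and let ε ⊆ X × X be an equivalence relation on X. Then ε̃ = ⋃_{w∈F(X)} w j₂(ε) w⁻¹, i.e. in the definition of ε̃ the set j₂*(ε) may be omitted. -/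
/-! Graev ultra-metrics on free groups (after Gao, Savchenko–Zarichnyi and
Shlossberg, "On Graev type ultra-metrics"). -/

namespace GraevStmt

variable {X : Type*}

/-- Remark 4.10 of [MS]: for an equivalence relation `ε` on `X`, in the
definition of `ε̃` the set `j₂*(ε)` may be omitted:
`ε̃ = ⋃_{w ∈ F(X)} w j₂(ε) w⁻¹`. -/
theorem tilde_eq_iUnion_j2 {X : Type*} [Nonempty X] (S : Set (X × X))
    (hS : Equivalence fun x y : X => (x, y) ∈ S) :
    tilde S = ⋃ w : FreeGroup X, (fun g => w * g * w⁻¹) '' (j2 '' S) := by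
  apply Set.Subset.antisymm
  · rintro g hg
    rw [tilde, Set.mem_iUnion] at hg
    obtain ⟨w, h, hmem, rfl⟩ := hg
    rcases hmem with ⟨p, hp, rfl⟩ | ⟨p, hp, rfl⟩
    · exact Set.mem_iUnion.2 ⟨w, ⟨j2 p, ⟨p, hp, rfl⟩, rfl⟩⟩
    · refine Set.mem_iUnion.2 ⟨w * FreeGroup.of p.1, ⟨j2 (p.2, p.1),
        ⟨(p.2, p.1), hS.symm hp, rfl⟩, ?_⟩⟩
      simp only [j2, j2s]
      group
  · rintro g hg
    rw [Set.mem_iUnion] at hg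
    obtain ⟨w, h, hmem, rfl⟩ := hg
    exact Set.mem_iUnion.2 ⟨w, ⟨h, Or.inl hmem, rfl⟩⟩

end GraevStmt
end

section
/- Let (X,d) be an ultra-metric space of diameter ≤ 1. Then the function d̂ is an invariant ultra-metric on the free group F(X): it is a metric satisfying the strong triangle inequality d̂(u,w) ≤ max{d̂(u,v), d̂(v,w)}, and d̂(uwv, uw'v) = d̂(w,w') for all u,v,w,w' ∈ F(X). -/
/-! Graev ultra-metrics on free groups (after Gao, Savchenko–Zarichnyi and
Shlossberg, "On Graev type ultra-metrics"). -/

namespace GraevStmt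

variable {X : Type*}

section Aux
variable {X : Type*} {d : X → X → ℝ}

lemma alpha_mul (v w : FreeGroup X) : alpha (v * w) = alpha v + alpha w := by
  simp [alpha, map_mul, toAdd_mul]

lemma equiv_rel (hd : IsUltraMetric d) {r : ℝ} (hr : 0 < r) :
    Equivalence (fun x y : X => d x y < r) := by
  obtain ⟨hsymm, hzero, htri⟩ := hd
  refine ⟨fun x => ?_, fun {x y} h => ?_, fun {x y z} h1 h2 => ?_⟩
  · simpa [(hzero x x).2 rfl] using hr
  · simpa [hsymm x y] using h
  · exact lt_of_le_of_lt (htri x y z) (max_lt h1 h2)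

lemma Fq_mono {r r' : ℝ} (h : r ≤ r') {v w : FreeGroup X}
    (hvw : Fq d r v = Fq d r w) : Fq d r' v = Fq d r' w := by
  let g : Quot (fun x y : X => d x y < r) → Quot (fun x y : X => d x y < r') :=
    Quot.lift (Quot.mk _) (fun a b hab => Quot.sound (lt_of_lt_of_le hab h))
  have key : ∀ u : FreeGroup X, Fq d r' u = FreeGroup.map g (Fq d r u) := by
    intro u
    have h2 : (FreeGroup.map g).comp (Fq d r) = Fq d r' := by
      apply FreeGroup.ext_hom; intro a
      simp [Fq, FreeGroup.map.of, g]
    rw [← h2]; rfl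
  rw [key, key, hvw]

lemma Fq_eq_of_alpha [Nonempty X] (hdiam : ∀ x y, d x y ≤ 1) {r : ℝ} (hr : 1 < r)
    {v w : FreeGroup X} (h : alpha v = alpha w) : Fq d r v = Fq d r w := by
  have hsub : ∀ a b : Quot (fun x y : X => d x y < r), a = b := by
    intro a b
    induction a using Quot.ind with | _ x =>
    induction b using Quot.ind with | _ y =>
    exact Quot.sound (lt_of_le_of_lt (hdiam x y) hr)
  obtain ⟨x0⟩ := ‹Nonempty X›
  set Q := Quot (fun x y : X => d x y < r)
  let β : FreeGroup Q →* Multiplicative ℤ :=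
    FreeGroup.lift (fun _ => Multiplicative.ofAdd (1 : ℤ))
  have hβcomp : β.comp (Fq d r) = FreeGroup.lift (fun _ : X => Multiplicative.ofAdd (1 : ℤ)) := by
    apply FreeGroup.ext_hom; intro a
    simp [Fq, β, FreeGroup.map.of]
  have hβinj : Function.Injective β := by
    let f : Multiplicative ℤ →* FreeGroup Q := zpowersHom _ (FreeGroup.of (Quot.mk _ x0))
    have hfid : f.comp β = MonoidHom.id _ := by
      apply FreeGroup.ext_hom; intro a
      simp only [MonoidHom.comp_apply, MonoidHom.id_apply, β, FreeGroup.lift_apply_of,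
        f, zpowersHom_apply]
      rw [hsub (Quot.mk _ x0) a]
      simp
    intro a b hab
    have := congrArg f hab
    simpa [← MonoidHom.comp_apply, hfid] using this
  apply hβinj
  have h1 : β (Fq d r v) = FreeGroup.lift (fun _ : X => Multiplicative.ofAdd (1 : ℤ)) v := by
    rw [← hβcomp]; rfl
  have h2 : β (Fq d r w) = FreeGroup.lift (fun _ : X => Multiplicative.ofAdd (1 : ℤ)) w := by
    rw [← hβcomp]; rfl
  rw [h1, h2]
  exact Multiplicative.toAdd.injective h

lemma map_eq_self [DecidableEq X] (f : X → X) (v : FreeGroup X)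
    (hf : ∀ p ∈ v.toWord, f p.1 = p.1) : FreeGroup.map f v = v := by
  conv_lhs => rw [← FreeGroup.mk_toWord (x := v)]
  rw [FreeGroup.map.mk]
  have : List.map (fun x : X × Bool => (f x.1, x.2)) v.toWord = v.toWord := by
    rw [List.map_congr_left (fun a ha => ?_), List.map_id]
    exact Prod.ext (hf a ha) rfl
  rw [this, FreeGroup.mk_toWord]

lemma eq_of_forall_Fq [Nonempty X] (hd : IsUltraMetric d) {v w : FreeGroup X}
    (h : ∀ r : ℝ, 0 < r → Fq d r v = Fq d r w) : v = w := by
  classical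
  have hsymm := hd.1; have hzero := hd.2.1
  have hpos : ∀ x y : X, x ≠ y → 0 < d x y := by
    intro x y hne
    rcases lt_trichotomy (d x y) 0 with h' | h' | h'
    · exfalso
      have h0 : d x x = 0 := (hzero x x).2 rfl
      have := hd.2.2 x y x
      rw [h0, hsymm y x] at this
      simp at this
      linarith
    · exact absurd ((hzero x y).1 h') hne
    · exact h'
  set L : Finset X := (v.toWord.map Prod.fst).toFinset ∪ (w.toWord.map Prod.fst).toFinset with hL
  set T : Finset ℝ := ((L ×ˢ L).filter fun p => p.1 ≠ p.2).image fun p => d p.1 p.2 with hT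
  set r : ℝ := if hT : T.Nonempty then min (T.min' hT) 1 else 1 with hrdef
  have hr0 : 0 < r := by
    rw [hrdef]
    split
    · next hTne =>
      refine lt_min ?_ one_pos
      obtain ⟨p, hp, hpe⟩ := Finset.mem_image.1 (T.min'_mem hTne)
      rw [← hpe]
      exact hpos _ _ (Finset.mem_filter.1 hp).2
    · exact one_pos
  have hrle : ∀ x ∈ L, ∀ y ∈ L, x ≠ y → r ≤ d x y := by
    intro x hx y hy hne
    have hmem : d x y ∈ T := by
      rw [hT]
      exact Finset.mem_image.2 ⟨(x, y), Finset.mem_filter.2 ⟨Finset.mem_product.2 ⟨hx, hy⟩, hne⟩, rfl⟩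
    have hTne : T.Nonempty := ⟨_, hmem⟩
    rw [hrdef, dif_pos hTne]
    exact le_trans (min_le_left _ _) (T.min'_le _ hmem)
  have hFq := h r hr0
  set q : X → Quot (fun x y : X => d x y < r) := Quot.mk _ with hq
  have hinj : ∀ x ∈ L, ∀ y ∈ L, q x = q y → x = y := by
    intro x hx y hy hqe
    by_contra hne
    have hlt : d x y < r := by
      have := Quot.eq.1 hqe
      rwa [Equivalence.eqvGen_iff (equiv_rel hd hr0)] at this
    exact absurd hlt (not_lt.2 (hrle x hx y hy hne))
  set g : Quot (fun x y : X => d x y < r) → X :=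
    fun c => if hc : ∃ x, x ∈ L ∧ q x = c then hc.choose else Classical.arbitrary X with hg
  have hgq : ∀ x ∈ L, g (q x) = x := by
    intro x hx
    have hc : ∃ y, y ∈ L ∧ q y = q x := ⟨x, hx, rfl⟩
    rw [hg]; dsimp only
    rw [dif_pos hc]
    exact hinj _ hc.choose_spec.1 _ hx hc.choose_spec.2
  have key : ∀ u : FreeGroup X, (∀ p ∈ u.toWord, p.1 ∈ L) →
      FreeGroup.map g (Fq d r u) = u := by
    intro u hu
    have h1 : FreeGroup.map g (Fq d r u) = FreeGroup.map (g ∘ q) u := FreeGroup.map.comp q g u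
    rw [h1]
    exact map_eq_self _ _ (fun p hp => hgq _ (hu p hp))
  have hvL : ∀ p ∈ v.toWord, p.1 ∈ L := fun p hp =>
    Finset.mem_union_left _ (List.mem_toFinset.2 (List.mem_map_of_mem hp))
  have hwL : ∀ p ∈ w.toWord, p.1 ∈ L := fun p hp =>
    Finset.mem_union_right _ (List.mem_toFinset.2 (List.mem_map_of_mem hp))
  calc v = FreeGroup.map g (Fq d r v) := (key v hvL).symm
    _ = FreeGroup.map g (Fq d r w) := by rw [hFq]
    _ = w := key w hwL

end Aux

/-- Theorem 3.1 of Savchenko–Zarichnyi: for an ultra-metric space `(X, d)` of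
diameter at most `1`, the function `d̂` is an invariant ultra-metric on the
free group `F(X)`. -/
theorem dHat_isUltraMetric_isInvariant {X : Type*} [Nonempty X]
    (d : X → X → ℝ) (hd : IsUltraMetric d) (hdiam : ∀ x y : X, d x y ≤ 1) :
    IsUltraMetric (dHat d) ∧ IsInvariant (dHat d) := by
  classical
  set S : FreeGroup X → FreeGroup X → Set ℝ :=
    fun v w => {r : ℝ | 0 < r ∧ Fq d r v = Fq d r w} with hS
  have hbdd : ∀ v w, BddBelow (S v w) := fun v w => ⟨0, fun r hr => le_of_lt hr.1⟩
  have hup : ∀ (v w : FreeGroup X) {r r' : ℝ}, r ∈ S v w → r ≤ r' → r' ∈ S v w :=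
    fun v w r r' hr h => ⟨lt_of_lt_of_le hr.1 h, Fq_mono h hr.2⟩
  have hmem2 : ∀ {v w : FreeGroup X}, alpha v = alpha w → (2 : ℝ) ∈ S v w :=
    fun {v w} h => ⟨two_pos, Fq_eq_of_alpha hdiam one_lt_two h⟩
  have hle1 : ∀ {v w : FreeGroup X}, alpha v = alpha w → sInf (S v w) ≤ 1 := by
    intro v w h
    have hsub : Set.Ioi (1 : ℝ) ⊆ S v w := fun r hr =>
      ⟨lt_trans one_pos hr, Fq_eq_of_alpha hdiam hr h⟩
    exact le_trans (csInf_le_csInf (hbdd v w) Set.nonempty_Ioi hsub) csInf_Ioi.le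
  constructor
  · refine ⟨?_, ?_, ?_⟩
    · -- symmetry
      intro v w
      by_cases hα : alpha v = alpha w
      · rw [dHat, dHat, if_pos hα, if_pos hα.symm]
        congr 1
        ext r
        exact and_congr_right fun _ => eq_comm
      · rw [dHat, dHat, if_neg hα, if_neg fun h => hα h.symm]
    · -- zero iff eq
      intro v w
      constructor
      · intro h0
        by_cases hα : alpha v = alpha w
        · rw [dHat, if_pos hα] at h0
          refine eq_of_forall_Fq hd fun r hr => ?_
          obtain ⟨s, hs, hslt⟩ := Real.lt_sInf_add_pos ⟨2, hmem2 hα⟩ hr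
          rw [h0, zero_add] at hslt
          exact (hup v w hs hslt.le).2
        · rw [dHat, if_neg hα] at h0
          exact absurd h0 one_ne_zero
      · rintro rfl
        rw [dHat, if_pos rfl]
        have h1 : {r : ℝ | 0 < r ∧ Fq d r v = Fq d r v} = Set.Ioi 0 := by
          ext r
          simp [Set.mem_Ioi]
        rw [h1]
        exact csInf_Ioi
    · -- strong triangle
      intro a b c
      by_cases hac : alpha a = alpha c
      · by_cases hab : alpha a = alpha b
        · have hbc : alpha b = alpha c := hab.symm.trans hac
          rw [dHat, dHat, dHat, if_pos hac, if_pos hab, if_pos hbc]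
          set A := sInf (S a b); set B := sInf (S b c)
          refine not_lt.1 fun hcon => ?_
          set ε : ℝ := (sInf (S a c) - max A B) / 2 with hε
          have hε0 : 0 < ε := by rw [hε]; linarith
          obtain ⟨s, hs, hslt⟩ := Real.lt_sInf_add_pos ⟨2, hmem2 hab⟩ hε0
          obtain ⟨t, ht, htlt⟩ := Real.lt_sInf_add_pos ⟨2, hmem2 hbc⟩ hε0
          have hm1 : max s t ∈ S a b := hup a b hs (le_max_left s t)
          have hm2 : max s t ∈ S b c := hup b c ht (le_max_right s t)
          have hmac : max s t ∈ S a c := ⟨hm1.1, hm1.2.trans hm2.2⟩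
          have h1 : sInf (S a c) ≤ max s t := csInf_le (hbdd a c) hmac
          have h2 : max s t ≤ max A B + ε :=
            max_le (hslt.le.trans (by gcongr; exact le_max_left A B))
              (htlt.le.trans (by gcongr; exact le_max_right A B))
          rw [hε] at h2
          linarith
        · have hbc : ¬ alpha b = alpha c := fun h => hab (hac.trans h.symm)
          rw [dHat, dHat, dHat, if_pos hac, if_neg hab, if_neg hbc, max_self]
          exact hle1 hac
      · by_cases hab : alpha a = alpha b
        · have hbc : ¬ alpha b = alpha c := fun h => hac (hab.trans h)
          calc dHat d a c = dHat d b c := by rw [dHat, dHat, if_neg hac, if_neg hbc]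
            _ ≤ max (dHat d a b) (dHat d b c) := le_max_right _ _
        · calc dHat d a c = dHat d a b := by rw [dHat, dHat, if_neg hac, if_neg hab]
            _ ≤ max (dHat d a b) (dHat d b c) := le_max_left _ _
  · -- invariance
    intro u v w w'
    have hα : alpha (u * w * v) = alpha (u * w' * v) ↔ alpha w = alpha w' := by
      simp only [alpha_mul]
      omega
    have hF : ∀ r : ℝ, (Fq d r (u * w * v) = Fq d r (u * w' * v)) ↔ Fq d r w = Fq d r w' := by
      intro r
      constructor
      · intro h
        simp only [map_mul] at h
        exact mul_left_cancel (mul_right_cancel h)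
      · intro h
        simp only [map_mul, h]
    by_cases h : alpha w = alpha w'
    · rw [dHat, dHat, if_pos (hα.2 h), if_pos h]
      congr 1
      ext r
      exact and_congr_right fun _ => hF r
    · rw [dHat, dHat, if_neg fun hh => h (hα.1 hh), if_neg h]

end GraevStmt
end
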